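/- Let 0 < T ≤ 1, N ∈ ℕ with N ≥ 1, and 0 = s₀ < t₁ < s₁ < t₂ < ⋯ < s_N < t_{N+1} = T. Let h : ℝ → ℝ be continuous on [0,T], H(t) = ∫₀^t h(τ)dτ, H₀ = min_{t∈[0,T]} H(t), and let β ∈ ℝ satisfy β < 2e^{H₀}/T². Let θ₁, θ₂ ∈ (1,2) and A₁, a₂ > 0. For i = 0,…,N let f̃ᵢ : ℝ × ℝ → ℝ be continuous, set F̃ᵢ(t,v) = ∫₀^v f̃ᵢ(t,s) ds, and assume for all t ∈ (sᵢ, t_{i+1}] and v ∈ ℝ: f̃ᵢ(t,−v) = −f̃ᵢ(t,v); F̃ᵢ(t,v) ≥ 0; v·f̃ᵢ(t,v) − 2F̃ᵢ(t,v) < 0 whenever v ≠ 0; |f̃ᵢ(t,v)| ≤ A₁|v|^{θ₁−1}; and for every M > 0 there exists ρ > 0 such that F̃ᵢ(t,v) ≥ M·v² for all t ∈ (sᵢ, t_{i+1}] and 0 < |v| ≤ ρ. For i = 1,…,N let Ĩᵢ : ℝ → ℝ be continuous with Ĩᵢ(−v) = −Ĩᵢ(v), |Ĩᵢ(v)| ≤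 a₂(|v|^{θ₂−1}+1), ∫₀^v Ĩᵢ(s)ds ≥ 0, and 2∫₀^v Ĩᵢ(s)ds ≥ Ĩᵢ(v)·v for all v ∈ ℝ. Define J̃₀(u) = ½‖u‖_E² − (β/2)∫₀^T |u'(t)|² dt − ∑_{i=0}^N ∫_{sᵢ}^{t_{i+1}} e^{H(t)} F̃ᵢ(t,u(t)) dt − ∑_{i=1}^N ∫₀^{u(tᵢ)} e^{H(tᵢ)} Ĩᵢ(s) ds, where ‖u‖_E = (∫₀^T e^{H(t)}|u''(t)|² dt)^{1/2}. Then for every u ∈ E_T that does not vanish identically on ⋃_{i=0}^N (sᵢ, t_{i+1}], there exists a unique c(u) > 0 such that J̃₀(c·u) < 0 for all c with 0 < |c| < c(u) and J̃₀(c·u) ≥ 0 for all c with |c| ≥ c(u). -/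

import Mathlib

open Set MeasureTheory Real

/-- `u`, with first and second derivatives `u'`, `u''`, belongs to the space
`E = H₀²(0,T)` of twice continuously differentiable functions on `[0,T]`
vanishing together with their first derivatives at the endpoints. -/
def IsInE (T : ℝ) (u u' u'' : ℝ → ℝ) : Prop :=
  (∀ t ∈ Set.Icc (0:ℝ) T, HasDerivAt u (u' t) t) ∧
  (∀ t ∈ Set.Icc (0:ℝ) T, HasDerivAt u' (u'' t) t) ∧
  ContinuousOn u'' (Set.Icc 0 T) ∧
  u 0 = 0 ∧ u T = 0 ∧ u' 0 = 0 ∧ u' T = 0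

/-!
Along the ray `c ↦ c u` the functional is `J̃₀(c u) = Q c² - P(c)`, where
`Q = ½‖u‖²_E - (β/2)‖u'‖²_{L²}` is positive because `‖u'‖²_{L²} ≤ (T²/2) ∫ |u''|²` (Cauchy–Schwarz
on `u' = ∫ u''`) and `β T² < 2 e^{H₀}`, and `P` collects the nonlinear terms. Oddness makes `P`
even. The inequality `v f(v) < 2 F(v)` says that `l ↦ F(l v) / l²` decreases, so `P(c) / c²` is
strictly decreasing on `(0, ∞)`; it exceeds `Q` for small `c` because `F̃ᵢ` is superquadratic at
`0`, and drops below `Q` for large `c` because `θ₁, θ₂ < 2`. Hence `P(c) / c² = Q` at exactly one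
`c(u) > 0`.
-/

open Filter Asymptotics

section Primitive

variable {Φ φ : ℝ → ℝ}

lemma hasDerivAt_comp_mul_div_sq (hΦ : ∀ w, HasDerivAt Φ (φ w) w) (v : ℝ) {l : ℝ} (hl : l ≠ 0) :
    HasDerivAt (fun l => Φ (l * v) / l ^ 2) ((l * v * φ (l * v) - 2 * Φ (l * v)) / l ^ 3) l := by
  refine (((hΦ (l * v)).comp l (hasDerivAt_mul_const v)).fun_div (hasDerivAt_pow 2 l)
    (pow_ne_zero 2 hl)).congr_deriv ?_
  simp only [Function.comp_apply, Nat.cast_ofNat]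
  field_simp
  ring

lemma antitoneOn_comp_mul_div_sq (hΦ : ∀ w, HasDerivAt Φ (φ w) w)
    (h : ∀ w, w * φ w ≤ 2 * Φ w) (v : ℝ) :
    AntitoneOn (fun l => Φ (l * v) / l ^ 2) (Ioi 0) := by
  refine antitoneOn_of_hasDerivWithinAt_nonpos (convex_Ioi 0)
    (fun l hl => (hasDerivAt_comp_mul_div_sq hΦ v (ne_of_gt hl)).continuousAt.continuousWithinAt)
    (fun l hl => (hasDerivAt_comp_mul_div_sq hΦ v (ne_of_gt (interior_subset hl))).hasDerivWithinAt)
    fun l hl => ?_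
  rw [interior_Ioi] at hl
  have := h (l * v)
  exact div_nonpos_of_nonpos_of_nonneg (by linarith) (pow_pos hl 3).le

lemma strictAntiOn_comp_mul_div_sq (hΦ : ∀ w, HasDerivAt Φ (φ w) w)
    (h : ∀ w, w ≠ 0 → w * φ w < 2 * Φ w) {v : ℝ} (hv : v ≠ 0) :
    StrictAntiOn (fun l => Φ (l * v) / l ^ 2) (Ioi 0) := by
  refine strictAntiOn_of_hasDerivWithinAt_neg (convex_Ioi 0)
    (fun l hl => (hasDerivAt_comp_mul_div_sq hΦ v (ne_of_gt hl)).continuousAt.continuousWithinAt)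
    (fun l hl => (hasDerivAt_comp_mul_div_sq hΦ v (ne_of_gt (interior_subset hl))).hasDerivWithinAt)
    fun l hl => ?_
  rw [interior_Ioi] at hl
  have := h (l * v) (mul_ne_zero (ne_of_gt hl) hv)
  exact div_neg_of_neg_of_pos (by linarith) (pow_pos hl 3)

lemma map_mul_le_sq_mul (hΦ : ∀ w, HasDerivAt Φ (φ w) w) (h : ∀ w, w * φ w ≤ 2 * Φ w)
    (v : ℝ) {l : ℝ} (hl : 1 ≤ l) : Φ (l * v) ≤ l ^ 2 * Φ v := by
  have := antitoneOn_comp_mul_div_sq hΦ h v (mem_Ioi.2 one_pos) (mem_Ioi.2 (one_pos.trans_le hl)) hl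
  simp only [one_mul, one_pow, div_one] at this
  rw [div_le_iff₀ (by positivity)] at this
  linarith

lemma map_mul_lt_sq_mul (hΦ : ∀ w, HasDerivAt Φ (φ w) w) (h : ∀ w, w ≠ 0 → w * φ w < 2 * Φ w)
    {v : ℝ} (hv : v ≠ 0) {l : ℝ} (hl : 1 < l) : Φ (l * v) < l ^ 2 * Φ v := by
  have := strictAntiOn_comp_mul_div_sq hΦ h hv (mem_Ioi.2 one_pos) (mem_Ioi.2 (one_pos.trans hl)) hl
  simp only [one_mul, one_pow, div_one] at this
  rw [div_lt_iff₀ (by positivity)] at this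
  linarith

lemma primitive_neg_of_odd (hφ : ∀ s, φ (-s) = -φ s) (v : ℝ) :
    ∫ s in (0:ℝ)..-v, φ s = ∫ s in (0:ℝ)..v, φ s := by
  have := intervalIntegral.integral_comp_neg (a := 0) (b := v) φ
  simp only [hφ, intervalIntegral.integral_neg, neg_zero] at this
  rw [intervalIntegral.integral_symm 0 (-v)] at this
  linarith

lemma primitive_le_rpow {v R A θ : ℝ} (hθ : 1 ≤ θ) (hR : 1 ≤ R) (hv : |v| ≤ R)
    (hφ : ∀ s, |φ s| ≤ A * (|s| ^ (θ - 1) + 1)) : ∫ s in (0:ℝ)..v, φ s ≤ 2 * A * R ^ θ := by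
  have hA : 0 ≤ A := nonneg_of_mul_nonneg_left ((abs_nonneg _).trans (hφ 0)) (by positivity)
  have hR1 : 1 ≤ R ^ (θ - 1) := one_le_rpow hR (by linarith)
  have hbound : ∀ s ∈ uIoc 0 v, ‖φ s‖ ≤ 2 * A * R ^ (θ - 1) := fun s hs => by
    have hs : |s| ≤ R := by
      rcases mem_uIoc.1 hs with h | h <;>
        exact (abs_le.2 ⟨by linarith [abs_le.1 hv, h.1], by linarith [abs_le.1 hv, h.2]⟩)
    have := rpow_le_rpow (abs_nonneg s) hs (by linarith : 0 ≤ θ - 1)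
    rw [Real.norm_eq_abs]
    nlinarith [hφ s]
  calc ∫ s in (0:ℝ)..v, φ s ≤ ‖∫ s in (0:ℝ)..v, φ s‖ := le_abs_self _
    _ ≤ 2 * A * R ^ (θ - 1) * |v - 0| := intervalIntegral.norm_integral_le_of_norm_le_const hbound
    _ ≤ 2 * A * R ^ (θ - 1) * R := by rw [sub_zero]; gcongr
    _ = 2 * A * R ^ θ := by rw [mul_assoc, ← rpow_add_one (by positivity)]; ring_nf

end Primitive

structure IsSubquadratic (g : ℝ → ℝ) : Prop where
  continuous : Continuous g
  even : ∀ c, g (-c) = g c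
  nonneg : ∀ c, 0 ≤ g c
  map_mul_le : ∀ c l, 1 ≤ l → g (l * c) ≤ l ^ 2 * g c
  isLittleO : g =o[atTop] fun c => c ^ 2

namespace IsSubquadratic

lemma add {f g : ℝ → ℝ} (hf : IsSubquadratic f) (hg : IsSubquadratic g) :
    IsSubquadratic fun c => f c + g c where
  continuous := hf.continuous.add hg.continuous
  even c := by rw [hf.even, hg.even]
  nonneg c := add_nonneg (hf.nonneg c) (hg.nonneg c)
  map_mul_le c l hl := by linarith [hf.map_mul_le c l hl, hg.map_mul_le c l hl]
  isLittleO := hf.isLittleO.add hg.isLittleO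

lemma sum {ι : Type*} (s : Finset ι) {g : ι → ℝ → ℝ} (hg : ∀ i ∈ s, IsSubquadratic (g i)) :
    IsSubquadratic fun c => ∑ i ∈ s, g i c where
  continuous := continuous_finsetSum s fun i hi => (hg i hi).continuous
  even c := Finset.sum_congr rfl fun i hi => (hg i hi).even c
  nonneg c := Finset.sum_nonneg fun i hi => (hg i hi).nonneg c
  map_mul_le c l hl := by
    rw [Finset.mul_sum]
    exact Finset.sum_le_sum fun i hi => (hg i hi).map_mul_le c l hl
  isLittleO := IsLittleO.fun_sum fun i hi => (hg i hi).isLittleO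

lemma const_mul {g : ℝ → ℝ} (hg : IsSubquadratic g) {k : ℝ} (hk : 0 ≤ k) :
    IsSubquadratic fun c => k * g c where
  continuous := continuous_const.mul hg.continuous
  even c := by rw [hg.even]
  nonneg c := mul_nonneg hk (hg.nonneg c)
  map_mul_le c l hl := by nlinarith [hg.map_mul_le c l hl]
  isLittleO := hg.isLittleO.const_mul_left k

end IsSubquadratic

lemma isLittleO_sq_of_le_rpow {g : ℝ → ℝ} {K θ : ℝ} (hθ : θ < 2) (hg0 : ∀ c, 0 ≤ g c)
    (hg : ∀ c, 1 ≤ c → g c ≤ K * c ^ θ) : g =o[atTop] fun c => c ^ 2 := by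
  have hpow : (fun c : ℝ => c ^ θ) =o[atTop] fun c => c ^ 2 := by
    refine (isLittleO_iff_tendsto' ?_).2 ?_
    · filter_upwards [eventually_gt_atTop 0] with c hc h using absurd h (by positivity)
    · refine (tendsto_rpow_neg_atTop (sub_pos.2 hθ)).congr' ?_
      filter_upwards [eventually_gt_atTop 0] with c hc
      rw [← rpow_natCast, ← rpow_sub hc]
      norm_num
  refine IsBigO.trans_isLittleO (IsBigO.of_bound K ?_) hpow
  filter_upwards [eventually_ge_atTop 1] with c hc
  rw [norm_of_nonneg (hg0 c), norm_of_nonneg (by positivity)]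
  exact hg c hc

lemma strictAntiOn_div_sq {P : ℝ → ℝ} (h : ∀ c, 0 < c → ∀ l, 1 < l → P (l * c) < l ^ 2 * P c) :
    StrictAntiOn (fun c => P c / c ^ 2) (Ioi 0) := by
  intro c (hc : 0 < c) d (hd : 0 < d) hcd
  have := h c hc (d / c) ((one_lt_div hc).2 hcd)
  rw [div_mul_cancel₀ _ hc.ne'] at this
  rw [div_lt_div_iff₀ (by positivity) (by positivity)]
  calc P d * c ^ 2 < (d / c) ^ 2 * P c * c ^ 2 := by gcongr
    _ = P c * d ^ 2 := by field_simp

theorem existsUnique_threshold {P : ℝ → ℝ} {Q : ℝ} (hQ : 0 < Q) (hP : IsSubquadratic P)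
    (hlt : ∀ c, 0 < c → ∀ l, 1 < l → P (l * c) < l ^ 2 * P c)
    (hzero : ∀ M, 0 < M → ∃ c, 0 < c ∧ M * c ^ 2 ≤ P c) :
    ∃! c₀ : ℝ, 0 < c₀ ∧ (∀ c, 0 < |c| → |c| < c₀ → Q * c ^ 2 - P c < 0) ∧
      ∀ c, c₀ ≤ |c| → 0 ≤ Q * c ^ 2 - P c := by
  set ψ := fun c => P c / c ^ 2
  have hψ : StrictAntiOn ψ (Ioi 0) := strictAntiOn_div_sq hlt
  obtain ⟨c₁, hc₁, hc₁Q⟩ : ∃ c₁, 0 < c₁ ∧ Q < ψ c₁ := by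
    obtain ⟨c, hc, h⟩ := hzero (2 * Q) (by positivity)
    exact ⟨c, hc, by rw [lt_div_iff₀ (by positivity)]; nlinarith [pow_pos hc 2]⟩
  obtain ⟨c₂, hc₂, hc₂Q⟩ : ∃ c₂, 0 < c₂ ∧ ψ c₂ < Q := by
    obtain ⟨c, h, hc⟩ := ((hP.isLittleO.bound (half_pos hQ)).and (eventually_gt_atTop 0)).exists
    rw [norm_of_nonneg (hP.nonneg c), norm_of_nonneg (by positivity)] at h
    exact ⟨c, hc, by rw [div_lt_iff₀ (by positivity)]; nlinarith [pow_pos hc 2]⟩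
  have h₁₂ : c₁ < c₂ := (hψ.lt_iff_gt hc₂ hc₁).1 (hc₂Q.trans hc₁Q)
  have hψc : ContinuousOn ψ (Icc c₁ c₂) := hP.continuous.continuousOn.div (continuousOn_pow 2)
    fun c hc => by have := hc₁.trans_le hc.1; positivity
  obtain ⟨c₀, hc₀, hψc₀⟩ := intermediate_value_Icc' h₁₂.le hψc ⟨hc₂Q.le, hc₁Q.le⟩
  have hc₀ : 0 < c₀ := hc₁.trans_le hc₀.1
  -- away from `0`, the sign of `Q c² - P c` is that of `ψ c₀ - ψ |c|`
  have hsign : ∀ c, c ≠ 0 → (Q * c ^ 2 - P c < 0 ↔ |c| < c₀) := by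
    intro c hc
    have hPabs : P c = P |c| := by rcases abs_choice c with h | h <;> rw [h]; exact (hP.even c).symm
    have hc' : 0 < |c| := abs_pos.2 hc
    rw [← hψ.lt_iff_gt hc₀ hc', hψc₀, hPabs, ← sq_abs c]
    change _ ↔ Q < P |c| / |c| ^ 2
    rw [lt_div_iff₀ (by positivity), sub_neg]
  refine ⟨c₀, ⟨hc₀, fun c hc h => (hsign c (abs_pos.1 hc)).2 h, fun c h => ?_⟩, ?_⟩
  · exact not_lt.1 fun hneg => (not_lt.2 h) ((hsign c (abs_pos.1 (hc₀.trans_le h))).1 hneg)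
  · rintro y ⟨hy, hlt, hge⟩
    have hy' : |y| = y := abs_of_pos hy
    have hc₀' : |c₀| = c₀ := abs_of_pos hc₀
    refine le_antisymm (not_lt.1 fun h => ?_) (not_lt.1 fun h => ?_)
    · have := (hsign c₀ hc₀.ne').1 (hlt c₀ (by rwa [hc₀']) (by rwa [hc₀']))
      exact (lt_irrefl c₀) (by rwa [hc₀'] at this)
    · exact (not_lt.2 (hge y hy'.ge)) ((hsign y hy.ne').2 (by rwa [hy']))

theorem existsUnique_threshold_add {g r : ℝ → ℝ} {Q : ℝ} (hQ : 0 < Q) (hg : IsSubquadratic g)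
    (hr : IsSubquadratic r) (hlt : ∀ c, 0 < c → ∀ l, 1 < l → g (l * c) < l ^ 2 * g c)
    (hzero : ∀ M, 0 < M → ∃ c, 0 < c ∧ M * c ^ 2 ≤ g c) :
    ∃! c₀ : ℝ, 0 < c₀ ∧ (∀ c, 0 < |c| → |c| < c₀ → Q * c ^ 2 - (g c + r c) < 0) ∧
      ∀ c, c₀ ≤ |c| → 0 ≤ Q * c ^ 2 - (g c + r c) :=
  existsUnique_threshold hQ (hg.add hr)
    (fun c hc l hl => by linarith [hlt c hc l hl, hr.map_mul_le c l hl.le])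
    fun M hM => (hzero M hM).imp fun c ⟨hc, h⟩ => ⟨hc, by linarith [hr.nonneg c]⟩

lemma isSubquadratic_primitive_comp_mul {φ : ℝ → ℝ} {A θ : ℝ} (v : ℝ) (hφ : Continuous φ)
    (hodd : ∀ s, φ (-s) = -φ s) (hnonneg : ∀ w, 0 ≤ ∫ s in (0:ℝ)..w, φ s)
    (hsub : ∀ w, w * φ w ≤ 2 * ∫ s in (0:ℝ)..w, φ s) (hθ : 1 ≤ θ) (hθ2 : θ < 2)
    (hbound : ∀ s, |φ s| ≤ A * (|s| ^ (θ - 1) + 1)) :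
    IsSubquadratic fun c => ∫ s in (0:ℝ)..c * v, φ s where
  continuous := (intervalIntegral.continuous_primitive (fun a b => hφ.intervalIntegrable a b)
    0).comp (continuous_id.mul continuous_const)
  even c := by rw [neg_mul, primitive_neg_of_odd hodd]
  nonneg c := hnonneg _
  map_mul_le c l hl := by
    rw [mul_assoc]
    exact map_mul_le_sq_mul (fun w => (hφ.integral_hasStrictDerivAt 0 w).hasDerivAt) hsub _ hl
  isLittleO := by
    refine isLittleO_sq_of_le_rpow (K := 2 * A * max |v| 1 ^ θ) hθ2 (fun c => hnonneg _)
      fun c hc => ?_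
    have hv : |c * v| ≤ c * max |v| 1 := by
      rw [abs_mul, abs_of_nonneg (by linarith)]
      gcongr
      exact le_max_left _ _
    calc _ ≤ 2 * A * (c * max |v| 1) ^ θ :=
          primitive_le_rpow hθ (one_le_mul_of_one_le_of_one_le hc (le_max_right _ _)) hv hbound
      _ = _ := by rw [mul_rpow (by linarith) (by positivity)]; ring

lemma continuous_intervalIntegral_of_continuousOn {a b : ℝ} (hab : a ≤ b) {g : ℝ → ℝ → ℝ}
    (hg : ContinuousOn (Function.uncurry g) (univ ×ˢ Icc a b)) :
    Continuous fun c => ∫ x in a..b, g c x := by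
  have hπ : Continuous fun p : ℝ × ℝ => (p.1, (projIcc a b hab p.2 : ℝ)) :=
    continuous_fst.prodMk (continuous_subtype_val.comp (continuous_projIcc.comp continuous_snd))
  have hcont : Continuous fun p : ℝ × ℝ => g p.1 (projIcc a b hab p.2) :=
    hg.comp_continuous hπ fun p => ⟨mem_univ _, (projIcc a b hab p.2).2⟩
  refine (intervalIntegral.continuous_parametric_intervalIntegral_of_continuous'
    (μ := volume) (f := fun c x => g c (projIcc a b hab x)) hcont a b).congr fun c => ?_
  refine intervalIntegral.integral_congr fun x hx => ?_
  rw [uIcc_of_le hab] at hx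
  simp [projIcc_of_mem hab hx]

section IntegralAlongRay

variable {a b : ℝ} {w u : ℝ → ℝ} {f F : ℝ → ℝ → ℝ}

lemma continuousOn_integrand_along_ray (hw : ContinuousOn w (Icc a b))
    (hu : ContinuousOn u (Icc a b)) (hf : Continuous (Function.uncurry f))
    (hF : ∀ x v, F x v = ∫ s in (0:ℝ)..v, f x s) :
    ContinuousOn (Function.uncurry fun c x => w x * F x (c * u x)) (univ ×ˢ Icc a b) := by
  have hFc : Continuous (Function.uncurry F) := by
    have : Function.uncurry F = fun p => ∫ s in (0:ℝ)..p.2, f p.1 s := funext fun p => hF p.1 p.2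
    rw [this]
    have hf' : Continuous (Function.uncurry f ∘ fun q : (ℝ × ℝ) × ℝ => (q.1.1, q.2)) :=
      hf.comp (continuous_fst.fst.prodMk continuous_snd)
    exact intervalIntegral.continuous_parametric_intervalIntegral_of_continuous
      (f := fun (p : ℝ × ℝ) s => f p.1 s) hf' continuous_snd
  have hsnd : MapsTo Prod.snd (univ ×ˢ Icc a b : Set (ℝ × ℝ)) (Icc a b) := fun p hp => hp.2
  exact (hw.comp continuousOn_snd hsnd).mul (hFc.comp_continuousOn
    (continuousOn_snd.prodMk (continuousOn_fst.mul (hu.comp continuousOn_snd hsnd))))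

lemma continuousOn_integrand_along_ray_apply (hw : ContinuousOn w (Icc a b))
    (hu : ContinuousOn u (Icc a b)) (hf : Continuous (Function.uncurry f))
    (hF : ∀ x v, F x v = ∫ s in (0:ℝ)..v, f x s) (c : ℝ) :
    ContinuousOn (fun x => w x * F x (c * u x)) (Icc a b) :=
  (continuousOn_integrand_along_ray hw hu hf hF).comp (continuousOn_const.prodMk continuousOn_id)
    fun _ hx => ⟨mem_univ _, hx⟩

lemma hasDerivAt_of_eq_primitive (hf : Continuous (Function.uncurry f))
    (hF : ∀ x v, F x v = ∫ s in (0:ℝ)..v, f x s) (x v : ℝ) : HasDerivAt (F x) (f x v) v := by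
  rw [show F x = fun v => ∫ s in (0:ℝ)..v, f x s from funext (hF x)]
  exact ((hf.uncurry_left x).integral_hasStrictDerivAt 0 v).hasDerivAt

lemma integrand_along_ray_mul_le {x : ℝ} (hw0 : 0 ≤ w x) (hf : Continuous (Function.uncurry f))
    (hF : ∀ x v, F x v = ∫ s in (0:ℝ)..v, f x s) (hsub : ∀ v, v ≠ 0 → v * f x v - 2 * F x v < 0)
    (c : ℝ) {l : ℝ} (hl : 1 ≤ l) : w x * F x (l * c * u x) ≤ l ^ 2 * (w x * F x (c * u x)) := by
  have hsub' v : v * f x v ≤ 2 * F x v := by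
    rcases eq_or_ne v 0 with rfl | hv
    · simp [hF]
    · linarith [hsub v hv]
  have := map_mul_le_sq_mul (hasDerivAt_of_eq_primitive hf hF x) hsub' (c * u x) hl
  calc w x * F x (l * c * u x) ≤ w x * (l ^ 2 * F x (c * u x)) := by
        rw [mul_assoc]; exact mul_le_mul_of_nonneg_left this hw0
    _ = _ := by ring

theorem isSubquadratic_integral_along_ray {A θ : ℝ} (hab : a ≤ b) (hw : ContinuousOn w (Icc a b))
    (hw0 : ∀ x ∈ Ioc a b, 0 ≤ w x) (hu : ContinuousOn u (Icc a b))
    (hf : Continuous (Function.uncurry f)) (hF : ∀ x v, F x v = ∫ s in (0:ℝ)..v, f x s)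
    (hodd : ∀ x ∈ Ioc a b, ∀ v, f x (-v) = -f x v) (hnonneg : ∀ x ∈ Ioc a b, ∀ v, 0 ≤ F x v)
    (hsub : ∀ x ∈ Ioc a b, ∀ v, v ≠ 0 → v * f x v - 2 * F x v < 0) (hA : 0 ≤ A) (hθ : 1 ≤ θ)
    (hθ2 : θ < 2) (hbound : ∀ x ∈ Ioc a b, ∀ v, |f x v| ≤ A * |v| ^ (θ - 1)) :
    IsSubquadratic fun c => ∫ x in a..b, w x * F x (c * u x) := by
  have hint c : IntervalIntegrable (fun x => w x * F x (c * u x)) volume a b :=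
    (continuousOn_integrand_along_ray_apply hw hu hf hF c).intervalIntegrable_of_Icc hab
  have hnonneg' c : 0 ≤ ∫ x in a..b, w x * F x (c * u x) := by
    rw [intervalIntegral.integral_of_le hab]
    exact setIntegral_nonneg measurableSet_Ioc fun x hx => mul_nonneg (hw0 x hx) (hnonneg x hx _)
  refine ⟨continuous_intervalIntegral_of_continuousOn hab
    (continuousOn_integrand_along_ray hw hu hf hF), fun c => ?_, hnonneg', fun c l hl => ?_, ?_⟩
  · refine intervalIntegral.integral_congr_ae (ae_of_all _ fun x hx => ?_)
    rw [uIoc_of_le hab] at hx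
    rw [neg_mul, hF, hF, primitive_neg_of_odd (hodd x hx)]
  · rw [← intervalIntegral.integral_const_mul]
    exact intervalIntegral.integral_mono_on_of_le_Ioo hab (hint _) ((hint c).const_mul _)
      fun x hx => integrand_along_ray_mul_le (hw0 x (Ioo_subset_Ioc_self hx)) hf hF
        (hsub x (Ioo_subset_Ioc_self hx)) c hl
  · obtain ⟨W, hW⟩ := isCompact_Icc.exists_bound_of_continuousOn hw
    obtain ⟨B, hB⟩ := isCompact_Icc.exists_bound_of_continuousOn hu
    set R := max B 1
    refine isLittleO_sq_of_le_rpow (K := (b - a) * (W * (2 * A * R ^ θ))) hθ2 hnonneg'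
      fun c hc => ?_
    calc ∫ x in a..b, w x * F x (c * u x) ≤ ∫ x in a..b, W * (2 * A * (c * R) ^ θ) :=
          intervalIntegral.integral_mono_on_of_le_Ioo hab (hint c) intervalIntegrable_const
            fun x hx => ?_
      _ = (b - a) * (W * (2 * A * R ^ θ)) * c ^ θ := by
          rw [intervalIntegral.integral_const, smul_eq_mul, mul_rpow (by linarith) (by positivity)]
          ring
    have hxI := Ioo_subset_Icc_self hx
    replace hx := Ioo_subset_Ioc_self hx
    have hcu : |c * u x| ≤ c * R := by
      rw [abs_mul, abs_of_nonneg (by linarith)]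
      gcongr
      exact (hB x hxI).trans (le_max_left _ _)
    have hFx : F x (c * u x) ≤ 2 * A * (c * R) ^ θ := by
      rw [hF]
      exact primitive_le_rpow hθ (one_le_mul_of_one_le_of_one_le hc (le_max_right _ _)) hcu
        fun s => (hbound x hx s).trans
          (mul_le_mul_of_nonneg_left (le_add_of_nonneg_right zero_le_one) hA)
    exact mul_le_mul ((Real.le_norm_self _).trans (hW x hxI)) hFx (hnonneg x hx _)
      ((norm_nonneg _).trans (hW x hxI))

theorem integral_along_ray_mul_lt (hw : ContinuousOn w (Icc a b)) (hw0 : ∀ x ∈ Ioc a b, 0 ≤ w x)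
    (hu : ContinuousOn u (Icc a b)) (hf : Continuous (Function.uncurry f))
    (hF : ∀ x v, F x v = ∫ s in (0:ℝ)..v, f x s)
    (hsub : ∀ x ∈ Ioc a b, ∀ v, v ≠ 0 → v * f x v - 2 * F x v < 0) {x₀ : ℝ} (hx₀ : x₀ ∈ Ioc a b)
    (hwx₀ : 0 < w x₀) (hux₀ : u x₀ ≠ 0) {c : ℝ} (hc : c ≠ 0) {l : ℝ} (hl : 1 < l) :
    ∫ x in a..b, w x * F x (l * c * u x) < l ^ 2 * ∫ x in a..b, w x * F x (c * u x) := by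
  rw [← intervalIntegral.integral_const_mul]
  refine intervalIntegral.integral_lt_integral_of_continuousOn_of_le_of_exists_lt
    (hx₀.1.trans_le hx₀.2) (continuousOn_integrand_along_ray_apply hw hu hf hF _)
    (continuousOn_const.mul (continuousOn_integrand_along_ray_apply hw hu hf hF c))
    (fun x hx => integrand_along_ray_mul_le (hw0 x hx) hf hF (hsub x hx) c hl.le)
    ⟨x₀, Ioc_subset_Icc_self hx₀, ?_⟩
  have := map_mul_lt_sq_mul (hasDerivAt_of_eq_primitive hf hF x₀)
    (fun v hv => sub_neg.1 (hsub x₀ hx₀ v hv)) (mul_ne_zero hc hux₀) hl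
  calc w x₀ * F x₀ (l * c * u x₀) < w x₀ * (l ^ 2 * F x₀ (c * u x₀)) := by
        rw [mul_assoc]; exact mul_lt_mul_of_pos_left this hwx₀
    _ = _ := by ring

theorem exists_mul_sq_le_integral_along_ray (hw : ContinuousOn w (Icc a b))
    (hw0 : ∀ x ∈ Ioc a b, 0 ≤ w x) (hu : ContinuousOn u (Icc a b))
    (hf : Continuous (Function.uncurry f)) (hF : ∀ x v, F x v = ∫ s in (0:ℝ)..v, f x s)
    (hnonneg : ∀ x ∈ Ioc a b, ∀ v, 0 ≤ F x v)
    (hsuper : ∀ M, 0 < M → ∃ ρ, 0 < ρ ∧ ∀ x ∈ Ioc a b, ∀ v, 0 < |v| → |v| ≤ ρ → M * v ^ 2 ≤ F x v)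
    {x₀ : ℝ} (hx₀ : x₀ ∈ Ioc a b) (hwx₀ : 0 < w x₀) (hux₀ : u x₀ ≠ 0) {M : ℝ} (hM : 0 < M) :
    ∃ c, 0 < c ∧ M * c ^ 2 ≤ ∫ x in a..b, w x * F x (c * u x) := by
  have hab : a < b := hx₀.1.trans_le hx₀.2
  set m := ∫ x in a..b, w x * u x ^ 2
  have hm : 0 < m := intervalIntegral.integral_pos hab (hw.mul (hu.pow 2))
    (fun x hx => mul_nonneg (hw0 x hx) (sq_nonneg _))
    ⟨x₀, Ioc_subset_Icc_self hx₀, mul_pos hwx₀ (pow_pos (abs_pos.2 hux₀) 2 |>.trans_eq (sq_abs _))⟩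
  obtain ⟨ρ, hρ, hF_ge⟩ := hsuper (M / m) (by positivity)
  obtain ⟨B, hB⟩ := isCompact_Icc.exists_bound_of_continuousOn hu
  set c := ρ / max B 1 with hc_def
  have hc : 0 < c := by positivity
  refine ⟨c, hc, ?_⟩
  have hpt : ∀ x ∈ Ioo a b, M / m * c ^ 2 * (w x * u x ^ 2) ≤ w x * F x (c * u x) := by
    intro x hx
    have hxI := Ioo_subset_Icc_self hx
    replace hx := Ioo_subset_Ioc_self hx
    have : M / m * (c * u x) ^ 2 ≤ F x (c * u x) := by
      rcases eq_or_ne (u x) 0 with h0 | h0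
      · simpa [h0] using hnonneg x hx 0
      refine hF_ge x hx _ (abs_pos.2 (mul_ne_zero hc.ne' h0)) ?_
      rw [abs_mul, abs_of_pos hc, hc_def, div_mul_comm]
      exact mul_le_of_le_one_left hρ.le
        ((div_le_one (by positivity)).2 ((hB x hxI).trans (le_max_left _ _)))
    calc M / m * c ^ 2 * (w x * u x ^ 2) = w x * (M / m * (c * u x) ^ 2) := by ring
      _ ≤ w x * F x (c * u x) := mul_le_mul_of_nonneg_left this (hw0 x hx)
  calc M * c ^ 2 = M / m * c ^ 2 * m := by field_simp
    _ = ∫ x in a..b, M / m * c ^ 2 * (w x * u x ^ 2) :=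
        (intervalIntegral.integral_const_mul _ _).symm
    _ ≤ _ := intervalIntegral.integral_mono_on_of_le_Ioo hab.le
        (((hw.mul (hu.pow 2)).intervalIntegrable_of_Icc hab.le).const_mul _)
        ((continuousOn_integrand_along_ray_apply hw hu hf hF c).intervalIntegrable_of_Icc hab.le)
        hpt

end IntegralAlongRay

lemma sq_intervalIntegral_le {φ : ℝ → ℝ} {a b : ℝ} (hab : a ≤ b) (hφ : ContinuousOn φ (Icc a b)) :
    (∫ x in a..b, φ x) ^ 2 ≤ (b - a) * ∫ x in a..b, φ x ^ 2 := by
  rcases hab.eq_or_lt with rfl | hab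
  · simp
  set I := ∫ x in a..b, φ x
  set A := I / (b - a)
  have hint := hφ.intervalIntegrable_of_Icc (μ := volume) hab.le
  have hint2 : IntervalIntegrable (fun x => φ x ^ 2) volume a b :=
    (hφ.pow 2).intervalIntegrable_of_Icc hab.le
  have hA : A * (b - a) = I := div_mul_cancel₀ _ (sub_pos.2 hab).ne'
  have h : 0 ≤ ∫ x in a..b, (φ x - A) ^ 2 :=
    intervalIntegral.integral_nonneg hab.le fun x _ => sq_nonneg _
  simp only [sub_sq] at h
  have hlin := (hint.const_mul 2).mul_const A
  rw [intervalIntegral.integral_add (hint2.sub hlin) intervalIntegrable_const,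
    intervalIntegral.integral_sub hint2 hlin, intervalIntegral.integral_mul_const, intervalIntegral.integral_const_mul,
    intervalIntegral.integral_const, smul_eq_mul] at h
  nlinarith [mul_nonneg (sub_pos.2 hab).le h]

lemma integral_sq_le_of_hasDerivAt {g g' : ℝ → ℝ} {T : ℝ} (hT : 0 ≤ T) (hg0 : g 0 = 0)
    (hg : ∀ t ∈ Icc 0 T, HasDerivAt g (g' t) t) (hg' : ContinuousOn g' (Icc 0 T)) :
    ∫ t in (0:ℝ)..T, g t ^ 2 ≤ T ^ 2 / 2 * ∫ t in (0:ℝ)..T, g' t ^ 2 := by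
  set C := ∫ t in (0:ℝ)..T, g' t ^ 2
  have hgc : ContinuousOn g (Icc 0 T) := fun t ht => (hg t ht).continuousAt.continuousWithinAt
  have hpt : ∀ t ∈ Icc 0 T, g t ^ 2 ≤ t * C := by
    intro t ht
    have hsub : Icc 0 t ⊆ Icc 0 T := Icc_subset_Icc_right ht.2
    have hFTC : ∫ x in (0:ℝ)..t, g' x = g t := by
      rw [intervalIntegral.integral_eq_sub_of_hasDerivAt
        (fun x hx => hg x (hsub (by rwa [uIcc_of_le ht.1] at hx)))
        ((hg'.mono hsub).intervalIntegrable_of_Icc ht.1), hg0, sub_zero]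
    calc g t ^ 2 ≤ (t - 0) * ∫ x in (0:ℝ)..t, g' x ^ 2 :=
          hFTC ▸ sq_intervalIntegral_le ht.1 (hg'.mono hsub)
      _ ≤ t * C := by
          rw [sub_zero]
          exact mul_le_mul_of_nonneg_left (intervalIntegral.integral_mono_interval le_rfl ht.1 ht.2
            (ae_of_all _ fun x => sq_nonneg _) ((hg'.pow 2).intervalIntegrable_of_Icc hT)) ht.1
  calc ∫ t in (0:ℝ)..T, g t ^ 2 ≤ ∫ t in (0:ℝ)..T, t * C :=
        intervalIntegral.integral_mono_on hT ((hgc.pow 2).intervalIntegrable_of_Icc hT)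
          ((continuous_id.mul continuous_const).intervalIntegrable _ _) hpt
    _ = T ^ 2 / 2 * C := by rw [intervalIntegral.integral_mul_const, integral_id]; ring

lemma exists_ne_zero_of_hasDerivAt {g g' : ℝ → ℝ} {T : ℝ} (hg0 : g 0 = 0)
    (hg : ∀ t ∈ Icc 0 T, HasDerivAt g (g' t) t) (hne : ∃ x ∈ Icc 0 T, g x ≠ 0) :
    ∃ x ∈ Icc 0 T, g' x ≠ 0 := by
  by_contra! h
  obtain ⟨x, hx, hgx⟩ := hne
  refine hgx ?_
  rw [constant_of_has_deriv_right_zero (fun t ht => (hg t ht).continuousAt.continuousWithinAt)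
    (fun t ht => by
      rw [← h t (Ico_subset_Icc_self ht)]
      exact (hg t (Ico_subset_Icc_self ht)).hasDerivWithinAt) x hx, hg0]

theorem weighted_sq_integral_sub_pos {T β m : ℝ} (hT : 0 < T) {w g g' : ℝ → ℝ}
    (hw : ContinuousOn w (Icc 0 T)) (hm : 0 < m) (hwm : ∀ x ∈ Icc 0 T, m ≤ w x)
    (hβ : β < 2 * m / T ^ 2) (hg0 : g 0 = 0) (hg : ∀ t ∈ Icc 0 T, HasDerivAt g (g' t) t)
    (hg' : ContinuousOn g' (Icc 0 T)) (hne : ∃ x ∈ Icc 0 T, g' x ≠ 0) :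
    0 < 1 / 2 * (∫ x in (0:ℝ)..T, w x * |g' x| ^ 2) - β / 2 * ∫ x in (0:ℝ)..T, |g x| ^ 2 := by
  simp only [sq_abs]
  set U := ∫ x in (0:ℝ)..T, w x * g' x ^ 2
  set V := ∫ x in (0:ℝ)..T, g x ^ 2
  obtain ⟨x₁, hx₁, hne⟩ := hne
  have hU : 0 < U := intervalIntegral.integral_pos hT (hw.mul (hg'.pow 2))
    (fun x hx => mul_nonneg (hm.le.trans (hwm x (Ioc_subset_Icc_self hx))) (sq_nonneg _))
    ⟨x₁, hx₁, mul_pos (hm.trans_le (hwm x₁ hx₁)) (by positivity)⟩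
  have hV0 : 0 ≤ V := intervalIntegral.integral_nonneg hT.le fun x _ => sq_nonneg _
  have hUm : ∫ x in (0:ℝ)..T, g' x ^ 2 ≤ U / m := by
    rw [le_div_iff₀ hm, ← intervalIntegral.integral_mul_const]
    exact intervalIntegral.integral_mono_on hT.le
      (((hg'.pow 2).mul continuousOn_const).intervalIntegrable_of_Icc hT.le)
      ((hw.mul (hg'.pow 2)).intervalIntegrable_of_Icc hT.le)
      fun x hx => by nlinarith [hwm x hx, sq_nonneg (g' x)]
  have hV : V ≤ T ^ 2 / 2 * (U / m) :=
    (integral_sq_le_of_hasDerivAt hT.le hg0 hg hg').trans (by gcongr)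
  have hβT : β * T ^ 2 < 2 * m := by rwa [lt_div_iff₀ (by positivity)] at hβ
  rcases le_or_gt β 0 with hβ0 | hβ0
  · nlinarith
  · have : β * (T ^ 2 / 2 * (U / m)) < U := by
      calc β * (T ^ 2 / 2 * (U / m)) = β * T ^ 2 * U / (2 * m) := by ring
        _ < 2 * m * U / (2 * m) := by gcongr
        _ = U := by field_simp
    nlinarith [mul_le_mul_of_nonneg_left hV hβ0.le]

lemma Icc_subset_Icc_of_interlaced {N : ℕ} {s t : ℕ → ℝ} (hst : ∀ i ≤ N, s i < t (i + 1))
    (hts : ∀ i, 1 ≤ i → i ≤ N → t i < s i) {i : ℕ} (hi : i ≤ N) :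
    Icc (s i) (t (i + 1)) ⊆ Icc (s 0) (t (N + 1)) := by
  have hs : ∀ k ≤ i, s 0 ≤ s k := by
    intro k hk
    induction k with
    | zero => exact le_rfl
    | succ k ih => linarith [ih (by omega), hst k (by omega), hts (k + 1) (by omega) (by omega)]
  have ht : ∀ k, i + k ≤ N → t (i + 1) ≤ t (i + k + 1) := by
    intro k hk
    induction k with
    | zero => exact le_rfl
    | succ k ih =>
      rw [show i + (k + 1) + 1 = i + k + 1 + 1 by omega]
      linarith [ih (by omega), hts (i + k + 1) (by omega) (by omega), hst (i + k + 1) (by omega)]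
  refine Icc_subset_Icc (hs i le_rfl) ?_
  simpa [show i + (N - i) + 1 = N + 1 by omega] using ht (N - i) (by omega)

theorem stmt11_general
    (T : ℝ) (hT0 : 0 < T)
    (N : ℕ)
    (ss tt : ℕ → ℝ)
    (hs0 : ss 0 = 0) (htN : tt (N + 1) = T)
    (hst : ∀ i ≤ N, ss i < tt (i + 1))
    (hts : ∀ i, 1 ≤ i → i ≤ N → tt i < ss i)
    (h : ℝ → ℝ) (hh : ContinuousOn h (Icc 0 T))
    (H : ℝ → ℝ) (hH : ∀ t, H t = ∫ τ in (0:ℝ)..t, h τ)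
    (H₀ : ℝ) (hH₀ : IsLeast (H '' Icc 0 T) H₀)
    (β : ℝ) (hβ : β < 2 * Real.exp H₀ / T ^ 2)
    (θ₁ θ₂ A₁ a₂ : ℝ)
    (hθ₁ : 1 < θ₁) (hθ₁' : θ₁ < 2) (hθ₂ : 1 < θ₂) (hθ₂' : θ₂ < 2)
    (hA₁ : 0 < A₁)
    (ftilde : ℕ → ℝ → ℝ → ℝ)
    (hft_cont : ∀ i ≤ N, Continuous (Function.uncurry (ftilde i)))
    (Ftilde : ℕ → ℝ → ℝ → ℝ)
    (hFt : ∀ i t v, Ftilde i t v = ∫ s in (0:ℝ)..v, ftilde i t s)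
    (hft_odd : ∀ i ≤ N, ∀ t ∈ Ioc (ss i) (tt (i + 1)), ∀ v : ℝ,
      ftilde i t (-v) = - ftilde i t v)
    (hFt_nonneg : ∀ i ≤ N, ∀ t ∈ Ioc (ss i) (tt (i + 1)), ∀ v : ℝ,
      0 ≤ Ftilde i t v)
    (hsub : ∀ i ≤ N, ∀ t ∈ Ioc (ss i) (tt (i + 1)), ∀ v : ℝ, v ≠ 0 →
      v * ftilde i t v - 2 * Ftilde i t v < 0)
    (hft_bound : ∀ i ≤ N, ∀ t ∈ Ioc (ss i) (tt (i + 1)), ∀ v : ℝ,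
      |ftilde i t v| ≤ A₁ * |v| ^ (θ₁ - 1))
    (hFt_super : ∀ i ≤ N, ∀ M : ℝ, 0 < M → ∃ ρ : ℝ, 0 < ρ ∧
      ∀ t ∈ Ioc (ss i) (tt (i + 1)), ∀ v : ℝ, 0 < |v| → |v| ≤ ρ →
        M * v ^ 2 ≤ Ftilde i t v)
    (Itilde : ℕ → ℝ → ℝ)
    (hIt_cont : ∀ i, 1 ≤ i → i ≤ N → Continuous (Itilde i))
    (hIt_odd : ∀ i, 1 ≤ i → i ≤ N → ∀ v : ℝ, Itilde i (-v) = - Itilde i v)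
    (hIt_bound : ∀ i, 1 ≤ i → i ≤ N → ∀ v : ℝ,
      |Itilde i v| ≤ a₂ * (|v| ^ (θ₂ - 1) + 1))
    (hIt_nonneg : ∀ i, 1 ≤ i → i ≤ N → ∀ v : ℝ,
      0 ≤ ∫ s in (0:ℝ)..v, Itilde i s)
    (hIt_ineq : ∀ i, 1 ≤ i → i ≤ N → ∀ v : ℝ,
      Itilde i v * v ≤ 2 * ∫ s in (0:ℝ)..v, Itilde i s)
    (J₀ : (ℝ → ℝ) → (ℝ → ℝ) → (ℝ → ℝ) → ℝ)
    (hJ₀ : ∀ u u' u'' : ℝ → ℝ, J₀ u u' u'' =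
      (1 / 2) * (∫ x in (0:ℝ)..T, Real.exp (H x) * |u'' x| ^ 2)
      - (β / 2) * (∫ x in (0:ℝ)..T, |u' x| ^ 2)
      - (∑ i ∈ Finset.range (N + 1),
          ∫ x in (ss i)..(tt (i + 1)), Real.exp (H x) * Ftilde i x (u x))
      - (∑ i ∈ Finset.Icc 1 N,
          ∫ s in (0:ℝ)..(u (tt i)), Real.exp (H (tt i)) * Itilde i s)) :
    ∀ u u' u'' : ℝ → ℝ, IsInE T u u' u'' →
      (∃ i ≤ N, ∃ x ∈ Ioc (ss i) (tt (i + 1)), u x ≠ 0) →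
      ∃! c₀ : ℝ, 0 < c₀ ∧
        (∀ c : ℝ, 0 < |c| → |c| < c₀ →
          J₀ (fun x => c * u x) (fun x => c * u' x) (fun x => c * u'' x) < 0) ∧
        (∀ c : ℝ, c₀ ≤ |c| →
          0 ≤ J₀ (fun x => c * u x) (fun x => c * u' x) (fun x => c * u'' x)) := by
  rintro u u' u'' ⟨hu', hu'', hu''c, hu0, -, hu'0, -⟩ ⟨i₀, hi₀, x₀, hx₀, hux₀⟩
  have hIcc : ∀ i ≤ N, Icc (ss i) (tt (i + 1)) ⊆ Icc 0 T := fun i hi => by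
    simpa only [hs0, htN] using Icc_subset_Icc_of_interlaced hst hts hi
  have hHc : ContinuousOn H (Icc 0 T) := by
    rw [show H = fun t => ∫ τ in (0:ℝ)..t, h τ from funext hH, ← uIcc_of_le hT0.le]
    exact intervalIntegral.continuousOn_primitive_interval
      (by rw [uIcc_of_le hT0.le]; exact hh.integrableOn_Icc)
  have hw : ContinuousOn (fun x => exp (H x)) (Icc 0 T) := continuous_exp.comp_continuousOn hHc
  have huc : ContinuousOn u (Icc 0 T) := fun t ht => (hu' t ht).continuousAt.continuousWithinAt
  have hQ := weighted_sq_integral_sub_pos hT0 hw (exp_pos H₀)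
    (fun x hx => exp_le_exp.2 (hH₀.2 ⟨x, hx, rfl⟩)) hβ hu'0 hu'' hu''c
    (exists_ne_zero_of_hasDerivAt hu'0 hu''
      (exists_ne_zero_of_hasDerivAt hu0 hu' ⟨x₀, hIcc i₀ hi₀ (Ioc_subset_Icc_self hx₀), hux₀⟩))
  set G : ℕ → ℝ → ℝ := fun i c => ∫ x in (ss i)..(tt (i + 1)), exp (H x) * Ftilde i x (c * u x)
  set K : ℕ → ℝ → ℝ := fun i c => ∫ s in (0:ℝ)..(c * u (tt i)), exp (H (tt i)) * Itilde i s
  have hG : ∀ i ∈ Finset.range (N + 1), IsSubquadratic (G i) := fun i hi => by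
    replace hi := Finset.mem_range_succ_iff.1 hi
    exact isSubquadratic_integral_along_ray (hst i hi).le (hw.mono (hIcc i hi))
      (fun x _ => (exp_pos _).le) (huc.mono (hIcc i hi)) (hft_cont i hi) (hFt i) (hft_odd i hi)
      (hFt_nonneg i hi) (hsub i hi) hA₁.le hθ₁.le hθ₁' (hft_bound i hi)
  have hK : ∀ i ∈ Finset.Icc 1 N, IsSubquadratic (K i) := fun i hi => by
    obtain ⟨h1, h2⟩ := Finset.mem_Icc.1 hi
    simp only [K, intervalIntegral.integral_const_mul]
    exact (isSubquadratic_primitive_comp_mul _ (hIt_cont i h1 h2) (hIt_odd i h1 h2)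
      (hIt_nonneg i h1 h2) (fun w => (mul_comm w _).trans_le (hIt_ineq i h1 h2 w)) hθ₂.le hθ₂'
      (hIt_bound i h1 h2)).const_mul (exp_pos _).le
  have hJ c : J₀ (fun x => c * u x) (fun x => c * u' x) (fun x => c * u'' x) =
      (1 / 2 * (∫ x in (0:ℝ)..T, exp (H x) * |u'' x| ^ 2) - β / 2 * ∫ x in (0:ℝ)..T, |u' x| ^ 2)
        * c ^ 2 - (G i₀ c + (∑ i ∈ (Finset.range (N + 1)).erase i₀, G i c +
          ∑ i ∈ Finset.Icc 1 N, K i c)) := by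
    rw [hJ₀, ← Finset.add_sum_erase _ _ (Finset.mem_range_succ_iff.2 hi₀)]
    simp only [G, K, abs_mul, mul_pow, sq_abs c, mul_left_comm _ (c ^ 2),
      intervalIntegral.integral_const_mul]
    ring
  simp only [hJ]
  have hw₀ : ContinuousOn (fun x => exp (H x)) (Icc (ss i₀) (tt (i₀ + 1))) := hw.mono (hIcc i₀ hi₀)
  have hu₀ : ContinuousOn u (Icc (ss i₀) (tt (i₀ + 1))) := huc.mono (hIcc i₀ hi₀)
  exact existsUnique_threshold_add hQ (hG i₀ (Finset.mem_range_succ_iff.2 hi₀))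
    ((IsSubquadratic.sum _ fun i hi => hG i (Finset.mem_of_mem_erase hi)).add
      (IsSubquadratic.sum _ hK))
    (fun c hc l hl => integral_along_ray_mul_lt hw₀ (fun x _ => (exp_pos _).le) hu₀
      (hft_cont i₀ hi₀) (hFt i₀) (hsub i₀ hi₀) hx₀ (exp_pos _) hux₀ hc.ne' hl)
    fun M hM => exists_mul_sq_le_integral_along_ray hw₀ (fun x _ => (exp_pos _).le) hu₀
      (hft_cont i₀ hi₀) (hFt i₀) (hFt_nonneg i₀ hi₀) (hFt_super i₀ hi₀) hx₀ (exp_pos _) hux₀ hM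

theorem stmt11
    (T : ℝ) (hT0 : 0 < T) (hT1 : T ≤ 1)
    (N : ℕ) (hN : 1 ≤ N)
    (ss tt : ℕ → ℝ)
    (hs0 : ss 0 = 0) (htN : tt (N + 1) = T)
    (hst : ∀ i ≤ N, ss i < tt (i + 1))
    (hts : ∀ i, 1 ≤ i → i ≤ N → tt i < ss i)
    (h : ℝ → ℝ) (hh : ContinuousOn h (Icc 0 T))
    (H : ℝ → ℝ) (hH : ∀ t, H t = ∫ τ in (0:ℝ)..t, h τ)
    (H₀ : ℝ) (hH₀ : IsLeast (H '' Icc 0 T) H₀)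
    (β : ℝ) (hβ : β < 2 * Real.exp H₀ / T ^ 2)
    (θ₁ θ₂ A₁ a₂ : ℝ)
    (hθ₁ : 1 < θ₁) (hθ₁' : θ₁ < 2) (hθ₂ : 1 < θ₂) (hθ₂' : θ₂ < 2)
    (hA₁ : 0 < A₁) (ha₂ : 0 < a₂)
    (ftilde : ℕ → ℝ → ℝ → ℝ)
    (hft_cont : ∀ i ≤ N, Continuous (Function.uncurry (ftilde i)))
    (Ftilde : ℕ → ℝ → ℝ → ℝ)
    (hFt : ∀ i t v, Ftilde i t v = ∫ s in (0:ℝ)..v, ftilde i t s)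
    (hft_odd : ∀ i ≤ N, ∀ t ∈ Ioc (ss i) (tt (i + 1)), ∀ v : ℝ,
      ftilde i t (-v) = - ftilde i t v)
    (hFt_nonneg : ∀ i ≤ N, ∀ t ∈ Ioc (ss i) (tt (i + 1)), ∀ v : ℝ,
      0 ≤ Ftilde i t v)
    (hsub : ∀ i ≤ N, ∀ t ∈ Ioc (ss i) (tt (i + 1)), ∀ v : ℝ, v ≠ 0 →
      v * ftilde i t v - 2 * Ftilde i t v < 0)
    (hft_bound : ∀ i ≤ N, ∀ t ∈ Ioc (ss i) (tt (i + 1)), ∀ v : ℝ,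
      |ftilde i t v| ≤ A₁ * |v| ^ (θ₁ - 1))
    (hFt_super : ∀ i ≤ N, ∀ M : ℝ, 0 < M → ∃ ρ : ℝ, 0 < ρ ∧
      ∀ t ∈ Ioc (ss i) (tt (i + 1)), ∀ v : ℝ, 0 < |v| → |v| ≤ ρ →
        M * v ^ 2 ≤ Ftilde i t v)
    (Itilde : ℕ → ℝ → ℝ)
    (hIt_cont : ∀ i, 1 ≤ i → i ≤ N → Continuous (Itilde i))
    (hIt_odd : ∀ i, 1 ≤ i → i ≤ N → ∀ v : ℝ, Itilde i (-v) = - Itilde i v)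
    (hIt_bound : ∀ i, 1 ≤ i → i ≤ N → ∀ v : ℝ,
      |Itilde i v| ≤ a₂ * (|v| ^ (θ₂ - 1) + 1))
    (hIt_nonneg : ∀ i, 1 ≤ i → i ≤ N → ∀ v : ℝ,
      0 ≤ ∫ s in (0:ℝ)..v, Itilde i s)
    (hIt_ineq : ∀ i, 1 ≤ i → i ≤ N → ∀ v : ℝ,
      Itilde i v * v ≤ 2 * ∫ s in (0:ℝ)..v, Itilde i s)
    (J₀ : (ℝ → ℝ) → (ℝ → ℝ) → (ℝ → ℝ) → ℝ)
    (hJ₀ : ∀ u u' u'' : ℝ → ℝ, J₀ u u' u'' =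
      (1 / 2) * (∫ x in (0:ℝ)..T, Real.exp (H x) * |u'' x| ^ 2)
      - (β / 2) * (∫ x in (0:ℝ)..T, |u' x| ^ 2)
      - (∑ i ∈ Finset.range (N + 1),
          ∫ x in (ss i)..(tt (i + 1)), Real.exp (H x) * Ftilde i x (u x))
      - (∑ i ∈ Finset.Icc 1 N,
          ∫ s in (0:ℝ)..(u (tt i)), Real.exp (H (tt i)) * Itilde i s)) :
    ∀ u u' u'' : ℝ → ℝ, IsInE T u u' u'' →
      (∃ i ≤ N, ∃ x ∈ Ioc (ss i) (tt (i + 1)), u x ≠ 0) →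
      ∃! c₀ : ℝ, 0 < c₀ ∧
        (∀ c : ℝ, 0 < |c| → |c| < c₀ →
          J₀ (fun x => c * u x) (fun x => c * u' x) (fun x => c * u'' x) < 0) ∧
        (∀ c : ℝ, c₀ ≤ |c| →
          0 ≤ J₀ (fun x => c * u x) (fun x => c * u' x) (fun x => c * u'' x)) :=
  stmt11_general T hT0 N ss tt hs0 htN hst hts h hh H hH H₀ hH₀ β hβ θ₁ θ₂ A₁ a₂ hθ₁ hθ₁' hθ₂ hθ₂'
    hA₁ ftilde hft_cont Ftilde hFt hft_odd hFt_nonneg hsub hft_bound hFt_super Itilde hIt_cont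
    hIt_odd hIt_bound hIt_nonneg hIt_ineq J₀ hJ₀
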